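/- Let A be a finite abelian group and B ≤ S_m a permutation group of degree m, and view A ≀ B = A^m ⋊ B as a permutation group on the m|A| points ⊔_{i=1}^m A (each copy of A acting on itself by translation, B permuting the copies). Let g = ((g_1, …, g_m), b) ∈ A ≀ B with b ≠ 1. Then the number of orbits of ⟨g⟩ on the m|A| points is at most |A| times the number of orbits of ⟨b⟩ on the m points; equivalently, ind(g) ≥ |A| · ind(b), where ind is computed in S_{m|A|} for g and in S_m for b. -/

import Mathlib

open scoped Classical

noncomputable section

/-- The automorphism of `Fin m → A` induced by a permutation of `Fin m`. -/
def permMulAut (A : Type*) [Group A] (m : ℕ) : Equiv.Perm (Fin m) →* MulAut (Fin m → A) where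
  toFun σ :=
    { toFun := fun f => f ∘ σ.symm
      invFun := fun f => f ∘ σ
      left_inv := fun f => by ext i; simp
      right_inv := fun f => by ext i; simp
      map_mul' := fun f g => rfl }
  map_one' := by ext f i; rfl
  map_mul' σ τ := rfl

/-- The wreath product `A ≀ S_m` as a semidirect product. -/
abbrev Wreath (A : Type*) [Group A] (m : ℕ) :=
  SemidirectProduct (Fin m → A) (Equiv.Perm (Fin m)) (permMulAut A m)

/-- The base group `A^m` inside the wreath product. -/
def basePart (A : Type*) [Group A] (m : ℕ) : Subgroup (Wreath A m) :=
  (SemidirectProduct.rightHom : Wreath A m →* Equiv.Perm (Fin m)).ker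

/-- `A ≀ B` for a subgroup `B ≤ S_m`, as a subgroup of `A ≀ S_m`. -/
def wreathSub (A : Type*) [Group A] {m : ℕ} (B : Subgroup (Equiv.Perm (Fin m))) :
    Subgroup (Wreath A m) :=
  B.comap (SemidirectProduct.rightHom : Wreath A m →* Equiv.Perm (Fin m))

/-- The action of the base group on the `m|A|` points. -/
def baseToPerm (A : Type*) [Group A] (m : ℕ) : (Fin m → A) →* Equiv.Perm (Fin m × A) where
  toFun f :=
    { toFun := fun p => (p.1, f p.1 * p.2)
      invFun := fun p => (p.1, (f p.1)⁻¹ * p.2)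
      left_inv := fun p => by simp
      right_inv := fun p => by simp }
  map_one' := by
    ext p
    · rfl
    · simp [Equiv.Perm.one_apply]
  map_mul' f g := by
    ext p
    · rfl
    · simp [Equiv.Perm.mul_apply, mul_assoc]

/-- The action of `S_m` on the `m|A|` points. -/
def topToPerm (A : Type*) (m : ℕ) : Equiv.Perm (Fin m) →* Equiv.Perm (Fin m × A) where
  toFun σ := Equiv.prodCongr σ (Equiv.refl A)
  map_one' := by ext p <;> simp
  map_mul' σ τ := by ext p <;> simp [Equiv.Perm.mul_apply]

/-- The imprimitive permutation representation of `A ≀ S_m` on `m|A|` points: each copy of `A`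
acts on itself by translation, and permutations permute the copies. -/
def wreathPerm (A : Type*) [Group A] (m : ℕ) : Wreath A m →* Equiv.Perm (Fin m × A) :=
  SemidirectProduct.lift (baseToPerm A m) (topToPerm A m) (by
    intro σ
    ext f p
    · simp [baseToPerm, topToPerm, permMulAut, MulAut.conj, Equiv.Perm.mul_apply,
        Equiv.Perm.inv_def]
    · simp [baseToPerm, topToPerm, permMulAut, MulAut.conj, Equiv.Perm.mul_apply,
        Equiv.Perm.inv_def] <;> rfl)


abbrev AbsGal (k : Type*) [Field k] : Type _ :=
  AlgebraicClosure k ≃ₐ[k] AlgebraicClosure k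

def SurSet (k : Type*) [Field k] (G : Type*) [Group G] : Set (AbsGal k →* G) :=
  {ψ | @Continuous (AbsGal k) G _ ⊥ ψ ∧ Function.Surjective ψ}

noncomputable def permIndex {α : Type*} [Fintype α] (g : Equiv.Perm α) : ℕ :=
  Fintype.card α - Nat.card (MulAction.orbitRel.Quotient (Subgroup.zpowers g) α)

noncomputable def minIndexOf {G α : Type*} [Group G] [Fintype α]
    (ρ : G →* Equiv.Perm α) (H : Subgroup G) : ℕ :=
  sInf ((fun g => permIndex (ρ g)) '' {g : G | g ∈ H ∧ g ≠ 1})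

def relDiscNorm (k : Type*) [Field k] [NumberField k]
    (F : IntermediateField k (AlgebraicClosure k)) : ℕ :=
  if h : FiniteDimensional k F then
    haveI := h
    haveI : NumberField F := NumberField.of_module_finite k F
    (NumberField.discr F).natAbs / (NumberField.discr k).natAbs ^ Module.finrank k F
  else 0

/-- `|disc_G(ψ)|` for a homomorphism `ψ : G_k → G`, where `G` comes with a permutation
representation `ρ` on a finite set with base point `x₀`: the absolute norm of
`disc(F/k)` where `F` is the fixed field of `ψ⁻¹(Stab_G(x₀))`. -/
def galDisc (k : Type*) [Field k] [NumberField k] {G : Type*} [Group G]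
    {α : Type*} [Fintype α] (ρ : G →* Equiv.Perm α) (x₀ : α) (ψ : AbsGal k →* G) : ℕ :=
  relDiscNorm k (IntermediateField.fixedField
    (Subgroup.comap ψ (Subgroup.comap ρ (MulAction.stabilizer (Equiv.Perm α) x₀))))


/-- The pushforward `f_* Sur(G_k, G)`. -/
def pushSur (k : Type*) [Field k] {G H : Type*} [Group G] [Group H] (f : G →* H) :
    Set (AbsGal k →* H) :=
  {π | ∃ ψ ∈ SurSet k G, f.comp ψ = π}

/-- The pushforward `f_* Sur(G_k, G; X)` of the surjections with `|disc| ≤ X`. -/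
def pushSurBdd (k : Type*) [Field k] [NumberField k] {G H : Type*} [Group G] [Group H]
    {α : Type*} [Fintype α] (ρ : G →* Equiv.Perm α) (x₀ : α) (f : G →* H) (X : ℝ) :
    Set (AbsGal k →* H) :=
  {π | ∃ ψ ∈ SurSet k G, (galDisc k ρ x₀ ψ : ℝ) ≤ X ∧ f.comp ψ = π}

/-- The natural map `G/N → G/T` for `N ≤ T`. -/
def quotMapHom {G : Type*} [Group G] (N T : Subgroup G) [N.Normal] [T.Normal] (h : N ≤ T) :
    (G ⧸ N) →* (G ⧸ T) :=
  QuotientGroup.map N T (MonoidHom.id G) (by simpa using h)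

/-- `S(π) = {π₁ ∈ p_* Sur(G_k, G) : h ∘ π₁ = π}`. -/
def SpiSet (k : Type*) [Field k] {G : Type*} [Group G] (N T : Subgroup G) [N.Normal] [T.Normal]
    (hNT : N ≤ T) (π : AbsGal k →* G ⧸ T) : Set (AbsGal k →* G ⧸ N) :=
  {π₁ | π₁ ∈ pushSur k (QuotientGroup.mk' N) ∧ (quotMapHom N T hNT).comp π₁ = π}

/-- The number of `ψ` lying over `π` (along `q`) with `|disc_G(ψ)| ≤ X`. -/
def twistCount (k : Type*) [Field k] [NumberField k] {G : Type*} [Group G]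
    {α : Type*} [Fintype α] (ρ : G →* Equiv.Perm α) (x₀ : α)
    {Q : Type*} [Group Q] (q : G →* Q) (π : AbsGal k →* Q) (X : ℝ) : ℕ :=
  Nat.card {ψ : AbsGal k →* G // ψ ∈ SurSet k G ∧ q.comp ψ = π ∧ (galDisc k ρ x₀ ψ : ℝ) ≤ X}

/-- `b(k, N(π₁))`: the number of orbits of the set of minimal index elements of `N` under the
Galois action `x : t ↦ (π̃(x) t π̃(x)⁻¹)^(χ(x)⁻¹)`, where `χ` is the cyclotomic character. -/
def bOf (k : Type*) [Field k] [NumberField k] {G : Type*} [Group G] {α : Type*} [Fintype α]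
    (ρ : G →* Equiv.Perm α) (N : Subgroup G) [N.Normal] (π₁ : AbsGal k →* G ⧸ N) : ℕ :=
  Nat.card (Quot (fun (t t' : {t : G // t ∈ N ∧ permIndex (ρ t) = minIndexOf ρ N}) =>
    ∃ (x : AbsGal k) (g : G) (e : ℕ),
      QuotientGroup.mk' N g = π₁ x ∧
      (∀ ζ : AlgebraicClosure k, ζ ^ Monoid.exponent N = 1 → (x ζ) ^ e = ζ) ∧
      (t' : G) = (g * (t : G) * g⁻¹) ^ e))

/-- `|H¹_ur(k, N(π₁))|`: the number of classes of continuous 1-cocycles `G_k → N` (with the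
action through `π₁` by conjugation) that are unramified at all finite places and split at all
infinite places, modulo coboundaries. -/
def h1urCard (k : Type*) [Field k] [NumberField k] {G : Type*} [Group G]
    (N : Subgroup G) [N.Normal] (π₁ : AbsGal k →* G ⧸ N) : ℕ :=
  Nat.card (Quot (fun (f f' : {f : AbsGal k → N //
      (@Continuous (AbsGal k) N _ ⊥ f) ∧
      (∀ x y : AbsGal k, ∃ g : G, QuotientGroup.mk' N g = π₁ x ∧
        ((f (x * y) : G) = (f x : G) * (g * (f y : G) * g⁻¹))) ∧
      (∀ A : ValuationSubring (AlgebraicClosure k), A ≠ ⊤ →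
        ∃ t : N, ∀ x : AbsGal k,
          x ∈ (ValuationSubring.inertiaSubgroup k A).map
                (ValuationSubring.decompositionSubgroup k A).subtype →
          ∃ g : G, QuotientGroup.mk' N g = π₁ x ∧
            ((f x : G) = g * (t : G) * g⁻¹ * (t : G)⁻¹)) ∧
      (∀ τ : AlgebraicClosure k →+* ℂ, ∃ t : N, ∀ x : AbsGal k,
          (∀ z : AlgebraicClosure k, ‖τ (x z)‖ = ‖τ z‖) →
          ∃ g : G, QuotientGroup.mk' N g = π₁ x ∧
            ((f x : G) = g * (t : G) * g⁻¹ * (t : G)⁻¹))}) =>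
    ∃ t : N, ∀ x : AbsGal k, ∃ g : G, QuotientGroup.mk' N g = π₁ x ∧
      ((f'.1 x : G) = (f.1 x : G) * (g * (t : G) * g⁻¹ * (t : G)⁻¹))))


/-- `G` is a transitive subgroup of `S_m`. -/
def IsTransitiveSub {m : ℕ} (B : Subgroup (Equiv.Perm (Fin m))) : Prop :=
  ∀ i j : Fin m, ∃ σ ∈ B, σ i = j

/-- `G ≤ A ≀ B` is an imprimitive permutation group of tower type `(A, B)`: it surjects
onto `B` and `A^m ∩ G` surjects onto `A` through each of the `m` coordinate projections. -/
structure IsTowerType (A : Type*) [Group A] {m : ℕ} (B : Subgroup (Equiv.Perm (Fin m)))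
    (G : Subgroup (Wreath A m)) : Prop where
  le : G ≤ wreathSub A B
  surj_right : Subgroup.map (SemidirectProduct.rightHom :
      Wreath A m →* Equiv.Perm (Fin m)) G = B
  surj_coord : ∀ i : Fin m, Subgroup.map (Pi.evalMonoidHom (fun _ : Fin m => A) i)
      (G.comap (SemidirectProduct.inl : (Fin m → A) →* Wreath A m)) = ⊤

/-- The degree `m|A|` permutation representation of a subgroup of `A ≀ S_m`. -/
def wreathRho (A : Type*) [Group A] (m : ℕ) (G : Subgroup (Wreath A m)) :
    ↥G →* Equiv.Perm (Fin m × A) :=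
  (wreathPerm A m).comp G.subtype

/-- The projection of a subgroup of `A ≀ S_m` onto `S_m`. -/
def wreathRight (A : Type*) [Group A] (m : ℕ) (G : Subgroup (Wreath A m)) :
    ↥G →* Equiv.Perm (Fin m) :=
  (SemidirectProduct.rightHom : Wreath A m →* Equiv.Perm (Fin m)).comp G.subtype

/-- A pure element of `A ≀ B`: its image in `B` is trivial and exactly one of its `m`
coordinates in `A` is nontrivial. -/
def IsPure {A : Type*} [Group A] {m : ℕ} (g : Wreath A m) : Prop :=
  g.right = 1 ∧ ∃! i : Fin m, g.left i ≠ 1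

lemma fst_wreathPerm_zpow {A : Type*} [Group A] {m : ℕ} (g : Wreath A m) (n : ℤ)
    (p : Fin m × A) : ((wreathPerm A m g ^ n) p).1 = (g.right ^ n) p.1 := by
  rw [← map_zpow]
  rw [show ((wreathPerm A m (g ^ n)) p).1 = (g ^ n).right p.1 from rfl,
    show (g ^ n).right = g.right ^ n from map_zpow SemidirectProduct.rightHom g n]

/-- For `g = ((g₁, …, g_m), b) ∈ A ≀ B` with `b ≠ 1`, the number of orbits of `g` on the
`m|A|` points is at most `|A|` times the number of orbits of `b` on the `m` points;
equivalently `ind(g) ≥ |A| · ind(b)`. -/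
theorem orbits_le_of_wreath
    (A : Type*) [CommGroup A] [Fintype A]
    (m : ℕ) (B : Subgroup (Equiv.Perm (Fin m)))
    (g : Wreath A m) (hg : g ∈ wreathSub A B) (hb : g.right ≠ 1) :
    Nat.card (MulAction.orbitRel.Quotient
        (Subgroup.zpowers (wreathPerm A m g)) (Fin m × A))
      ≤ Fintype.card A *
        Nat.card (MulAction.orbitRel.Quotient (Subgroup.zpowers g.right) (Fin m)) ∧
    Fintype.card A * permIndex g.right ≤ permIndex (wreathPerm A m g) := by
  classical
  set σ := g.right with hσ
  set ρ := wreathPerm A m g with hρ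
  set sg := MulAction.orbitRel (Subgroup.zpowers ρ) (Fin m × A) with hsg
  set sb := MulAction.orbitRel (Subgroup.zpowers σ) (Fin m) with hsb
  have hcompat : ∀ p q : Fin m × A, sg.r p q → sb.r p.1 q.1 := by
    intro p q h
    rw [hsg, MulAction.orbitRel_apply, MulAction.mem_orbit_iff] at h
    rw [hsb, MulAction.orbitRel_apply, MulAction.mem_orbit_iff]
    obtain ⟨u, hu⟩ := h
    obtain ⟨n, hn⟩ := Subgroup.mem_zpowers_iff.mp u.2
    refine ⟨⟨σ ^ n, Subgroup.zpow_mem_zpowers _ _⟩, ?_⟩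
    have h2 : (ρ ^ n) q = p := by rw [hn]; exact hu
    have h3 : ((ρ ^ n) q).1 = (σ ^ n) q.1 := fst_wreathPerm_zpow g n q
    show (σ ^ n) q.1 = p.1
    rw [← h3, h2]
  let projQ : Quotient sg → Quotient sb :=
    Quot.map Prod.fst hcompat
  have projQ_mk : ∀ p : Fin m × A, projQ (Quotient.mk sg p) = Quotient.mk sb p.1 :=
    fun p => rfl
  have main : ∀ q : Quotient sg, ∃ p : Fin m × A,
      Quotient.mk sg p = q ∧ p.1 = (projQ q).out := by
    intro q
    obtain ⟨p₀, rfl⟩ := Quotient.exists_rep q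
    have h1 : Quotient.mk sb (projQ (Quotient.mk sg p₀)).out = Quotient.mk sb p₀.1 := by
      rw [← projQ_mk]; exact Quotient.out_eq _
    have h2 : (projQ (Quotient.mk sg p₀)).out ∈ MulAction.orbit (Subgroup.zpowers σ) p₀.1 :=
      Quotient.exact h1
    obtain ⟨u, hu⟩ := MulAction.mem_orbit_iff.mp h2
    obtain ⟨n, hn⟩ := Subgroup.mem_zpowers_iff.mp u.2
    refine ⟨(ρ ^ n) p₀, ?_, ?_⟩
    · apply Quotient.sound
      show sg.r _ _
      rw [hsg, MulAction.orbitRel_apply, MulAction.mem_orbit_iff]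
      exact ⟨⟨ρ ^ n, Subgroup.zpow_mem_zpowers _ _⟩, rfl⟩
    · rw [fst_wreathPerm_zpow g n p₀]
      show (σ ^ n) p₀.1 = _
      rw [hn]; exact hu
  let F : Quotient sg → Quotient sb × A :=
    fun q => (projQ q, (Classical.choose (main q)).2)
  have hinj : Function.Injective F := by
    intro q₁ q₂ h
    have h' := h
    simp only [F, Prod.mk.injEq] at h'
    obtain ⟨h1, h2⟩ := h' 
    obtain ⟨e₁, f₁⟩ := Classical.choose_spec (main q₁)
    obtain ⟨e₂, f₂⟩ := Classical.choose_spec (main q₂)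
    have hpe : Classical.choose (main q₁) = Classical.choose (main q₂) :=
      Prod.ext (by rw [f₁, f₂, h1]) h2
    rw [← e₁, ← e₂, hpe]
  have key : Nat.card (Quotient sg) ≤ Fintype.card A * Nat.card (Quotient sb) := by
    calc Nat.card (Quotient sg) ≤ Nat.card (Quotient sb × A) :=
          Nat.card_le_card_of_injective F hinj
      _ = Nat.card (Quotient sb) * Nat.card A := Nat.card_prod _ _
      _ = Fintype.card A * Nat.card (Quotient sb) := by
          simp [Nat.card_eq_fintype_card, mul_comm]
  refine ⟨key, ?_⟩
  unfold permIndex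
  have hcards : Fintype.card (Fin m × A) = Fintype.card A * Fintype.card (Fin m) := by
    rw [Fintype.card_prod, mul_comm]
  have hQb : Nat.card (MulAction.orbitRel.Quotient (Subgroup.zpowers σ) (Fin m))
      = Nat.card (Quotient sb) := rfl
  have hQg : Nat.card (MulAction.orbitRel.Quotient (Subgroup.zpowers ρ) (Fin m × A))
      = Nat.card (Quotient sg) := rfl
  rw [hcards, hQb, hQg, Nat.mul_sub]
  exact Nat.sub_le_sub_left key _

end
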